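/- Let (X,r,μ) be a metric measure space with μ a probability measure with support equal to X. Suppose that for every ε > 0 there exists δ > 0 such that μ{x ∈ X : μ(B_ε(x)) ≤ δ} = 0. Then (X,r) is totally bounded. -/

import Mathlib

/-!
If `(X, r)` were not totally bounded, it would contain an infinite sequence of points `u n`
at mutual distance at least `ε`. With `δ` the bound for radius `ε / 4`, the points whose
`ε / 4`-ball has mass at most `δ` form a null set, so by full support each `u n` has such a
"thick" point `v n` within `ε / 4`. The closed `ε / 4`-balls around the `v n` are pairwise
disjoint and each has mass more than `δ`, which is impossible for a probability measure.
-/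

open Metric MeasureTheory ENNReal Function

lemma exists_seq_pairwise_le_dist_of_not_totallyBounded {X : Type*} [PseudoMetricSpace X]
    {s : Set X} (hs : ¬ TotallyBounded s) :
    ∃ ε > (0 : ℝ), ∃ u : ℕ → X, (∀ n, u n ∈ s) ∧ Pairwise fun m n ↦ ε ≤ dist (u m) (u n) := by
  obtain ⟨ε, hε, hcover⟩ : ∃ ε > (0 : ℝ), ∀ t : Set X, t.Finite → ∃ c ∈ s, ∀ y ∈ t, ε ≤ dist c y
  · simpa [Metric.totallyBounded_iff, Set.not_subset] using hs
  obtain ⟨u, hu⟩ := Set.seq_of_forall_finite_exists hcover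
  have hfar : ∀ m n, m < n → ε ≤ dist (u m) (u n) := fun m n hmn ↦
    dist_comm (u n) (u m) ▸ (hu n).2 _ ⟨m, hmn, rfl⟩
  refine ⟨ε, hε, u, fun n ↦ (hu n).1, fun m n hmn ↦ ?_⟩
  rcases hmn.lt_or_gt with hlt | hgt
  · exact hfar m n hlt
  · exact dist_comm (u n) (u m) ▸ hfar n m hgt

lemma closedBall_disjoint_closedBall_of_mem_ball {X : Type*} [PseudoMetricSpace X]
    {a b y z : X} {r : ℝ} (hab : 4 * r ≤ dist a b) (hy : y ∈ ball a r) (hz : z ∈ ball b r) :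
    Disjoint (closedBall y r) (closedBall z r) := by
  apply closedBall_disjoint_closedBall
  have hya : dist a y < r := mem_ball'.1 hy
  have hzb : dist z b < r := mem_ball.1 hz
  linarith [dist_triangle4 a y z b]

lemma MeasureTheory.finite_of_pairwise_disjoint_of_le_measure {α ι : Type*} [MeasurableSpace α]
    {μ : Measure α} [IsFiniteMeasure μ] {s : ι → Set α} {δ : ℝ≥0∞} (hδ : 0 < δ)
    (hs : ∀ i, MeasurableSet (s i)) (hdisj : Pairwise (Disjoint on s)) (hle : ∀ i, δ ≤ μ (s i)) :
    Finite ι := by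
  simpa [hle, Set.finite_univ_iff] using
    Measure.finite_const_le_meas_of_disjoint_iUnion μ hδ hs hdisj (measure_ne_top μ _)

theorem totallyBounded_of_no_thin_points_general {X : Type*} [MetricSpace X]
    [MeasurableSpace X] [BorelSpace X]
    (μ : Measure X) [IsProbabilityMeasure μ]
    (hsupp : ∀ x : X, ∀ r > (0 : ℝ), 0 < μ (ball x r))
    (h : ∀ ε > (0 : ℝ), ∃ δ : ℝ≥0∞, 0 < δ ∧ μ {x : X | μ (closedBall x ε) ≤ δ} = 0) :
    TotallyBounded (Set.univ : Set X) := by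
  by_contra hnt
  obtain ⟨ε, hε, u, -, hu⟩ := exists_seq_pairwise_le_dist_of_not_totallyBounded hnt
  have hr : 0 < ε / 4 := by positivity
  obtain ⟨δ, hδ, hthin⟩ := h (ε / 4) hr
  have hthick : ∀ n, ∃ v ∈ ball (u n) (ε / 4), ¬ μ (closedBall v (ε / 4)) ≤ δ := fun n ↦
    Measure.exists_mem_of_measure_ne_zero_of_ae (hsupp (u n) _ hr).ne'
      (ae_restrict_of_ae (measure_eq_zero_iff_ae_notMem.1 hthin))
  choose v hv hvδ using hthick
  have hdisj : Pairwise (Disjoint on fun n ↦ closedBall (v n) (ε / 4)) := fun m n hmn ↦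
    closedBall_disjoint_closedBall_of_mem_ball (by linarith [hu hmn]) (hv m) (hv n)
  have : Finite ℕ := finite_of_pairwise_disjoint_of_le_measure hδ
    (fun _ ↦ measurableSet_closedBall) hdisj (fun n ↦ (not_le.1 (hvδ n)).le)
  exact not_finite ℕ

/-- If a Borel probability measure `μ` with full support on a separable metric space
satisfies: for every `ε > 0` there is `δ > 0` with `μ{x : μ(B_ε(x)) ≤ δ} = 0`,
then the space is totally bounded. -/
theorem totallyBounded_of_no_thin_points {X : Type*} [MetricSpace X]
    [TopologicalSpace.SeparableSpace X] [MeasurableSpace X] [BorelSpace X]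
    (μ : Measure X) [IsProbabilityMeasure μ]
    (hsupp : ∀ x : X, ∀ r > (0 : ℝ), 0 < μ (ball x r))
    (h : ∀ ε > (0 : ℝ), ∃ δ : ℝ≥0∞, 0 < δ ∧ μ {x : X | μ (closedBall x ε) ≤ δ} = 0) :
    TotallyBounded (Set.univ : Set X) :=
  totallyBounded_of_no_thin_points_general μ hsupp h
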